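/- arXiv:2005.04657 — 2 statements merged into one kernel-verified Lean document; each statement's English description precedes it below -/
import Mathlib

section
/- Let y : ℝ → ℝ be nonnegative and continuous, continuously differentiable on (0,∞), constant on (-∞,0], and let P be a probability measure on [0,∞). Suppose |y'(t)| ≤ C₁ y(t) + C₂ ∫₀^∞ y(t-s) dP(s) for all t > 0, with constants C₁, C₂ > 0. If there exists κ > 0 with κ > max{ |y'(0+)|/y(0), C₁ + C₂ ∫₀^∞ e^{κs} dP(s) }, then for all t > 0 and s > 0 one has e^{-κs} y(t) < y(t-s) < e^{κs} y(t). -/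
/-!
A differential inequality `|y'| < κ y` on an interval gives the two-sided Grönwall bounds
`e^{-κ s} y t < y (t - s) < e^{κ s} y t` there, since `e^{κ τ} y τ` increases and
`e^{-κ τ} y τ` decreases. Let `G` be the set of times where the right-hand side
`C₁ y + C₂ ∫ y(· - s) dP` is `< κ y`; it is open, because the delay integral is continuous by
dominated convergence. If `[0, t) ⊆ G`, then `|y'| < κ y` on `(0, t)`, so the past is bounded by
`y(t - s) ≤ e^{κ s} y t`, whence `∫ y(t - s) dP ≤ (∫ e^{κ s} dP) y t` and
`C₁ + C₂ ∫ e^{κ s} dP < κ` puts `t` in `G`. Continuous induction gives `[0, ∞) ⊆ G`.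
-/

open MeasureTheory Real Set Filter Topology

lemma Ici_subset_of_forall_Ico_subset {α : Type*} [ConditionallyCompleteLinearOrder α]
    [TopologicalSpace α] [OrderTopology α] {G : Set α} {a : α} (hG : IsOpen G)
    (hstep : ∀ t ≥ a, Ico a t ⊆ G → t ∈ G) : Ici a ⊆ G := by
  by_contra hsub
  obtain ⟨b, hba, hbG⟩ := not_subset.mp hsub
  have hbdd : BddBelow (Ici a ∩ Gᶜ) := ⟨a, fun x hx => hx.1⟩
  obtain ⟨hle, hnot⟩ :=
    (isClosed_Ici.inter hG.isClosed_compl).csInf_mem ⟨b, hba, hbG⟩ hbdd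
  refine hnot (hstep _ hle fun τ hτ => ?_)
  by_contra hτG
  exact hτ.2.not_ge (csInf_le hbdd ⟨hτ.1, hτG⟩)

lemma exp_mul_mul_lt_of_deriv {y y' : ℝ → ℝ} {c p q : ℝ} (hpq : p < q)
    (hy : ContinuousOn y (Icc p q)) (hderiv : ∀ τ ∈ Ioo p q, HasDerivAt y (y' τ) τ)
    (hpos : ∀ τ ∈ Ioo p q, 0 < c * y τ + y' τ) :
    exp (c * p) * y p < exp (c * q) * y q := by
  have hmono : StrictMonoOn (fun τ => exp (c * τ) * y τ) (Icc p q) := by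
    refine strictMonoOn_of_deriv_pos (convex_Icc p q)
      ((continuous_const.mul continuous_id).rexp.continuousOn.mul hy) fun τ hτ => ?_
    rw [interior_Icc] at hτ
    have hexp : HasDerivAt (fun τ => exp (c * τ)) (exp (c * τ) * c) τ := by
      simpa using ((hasDerivAt_id τ).const_mul c).exp
    have hprod : HasDerivAt (fun τ => exp (c * τ) * y τ)
        (exp (c * τ) * c * y τ + exp (c * τ) * y' τ) τ := hexp.mul (hderiv τ hτ)
    rw [hprod.deriv]
    nlinarith [exp_pos (c * τ), hpos τ hτ]
  exact hmono (left_mem_Icc.2 hpq.le) (right_mem_Icc.2 hpq.le) hpq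

lemma lt_exp_mul_of_abs_deriv_lt {y y' : ℝ → ℝ} {κ p q : ℝ} (hpq : p < q)
    (hy : ContinuousOn y (Icc p q)) (hderiv : ∀ τ ∈ Ioo p q, HasDerivAt y (y' τ) τ)
    (hbd : ∀ τ ∈ Ioo p q, |y' τ| < κ * y τ) :
    y p < exp (κ * (q - p)) * y q ∧ y q < exp (κ * (q - p)) * y p := by
  have hdiv : ∀ {a b u v : ℝ}, exp a * u < exp b * v → u < exp (b - a) * v := fun h => by
    rw [exp_sub, div_mul_eq_mul_div, lt_div_iff₀ (exp_pos _)]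
    linarith
  have hgrow := exp_mul_mul_lt_of_deriv (c := κ) hpq hy hderiv fun τ hτ => by
    linarith [neg_abs_le (y' τ), hbd τ hτ]
  -- the decay bound is the growth bound for `-y` at rate `-κ`
  have hdecay := exp_mul_mul_lt_of_deriv (c := -κ) (y := fun τ => -y τ) (y' := fun τ => -y' τ)
    hpq hy.neg (fun τ hτ => (hderiv τ hτ).neg) fun τ hτ => by
      linarith [le_abs_self (y' τ), hbd τ hτ]
  refine ⟨by simpa [mul_sub] using hdiv hgrow, ?_⟩
  have := hdiv (a := -κ * q) (b := -κ * p) (u := y q) (v := y p) (by linarith)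
  rwa [show -κ * p - -κ * q = κ * (q - p) by ring] at this

section ConstantPast

variable {y : ℝ → ℝ}

lemma apply_eq_apply_max_zero (hconst : ∀ u ≤ 0, y u = y 0) (u : ℝ) : y u = y (max u 0) := by
  rcases le_total u 0 with hu | hu
  · rw [max_eq_right hu, hconst u hu]
  · rw [max_eq_left hu]

lemma exists_norm_le_of_le (hy : Continuous y) (hconst : ∀ u ≤ 0, y u = y 0) (T : ℝ) :
    ∃ B, ∀ u ≤ T, ‖y u‖ ≤ B := by
  obtain ⟨B, hB⟩ := (isCompact_Icc (a := 0) (b := max T 0)).exists_bound_of_continuousOn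
    hy.continuousOn
  refine ⟨B, fun u hu => ?_⟩
  rw [apply_eq_apply_max_zero hconst u]
  exact hB _ ⟨le_max_right _ _, max_le_max hu le_rfl⟩

lemma exp_mul_lt_and_lt_exp_mul_of_abs_deriv_lt {y' : ℝ → ℝ} {κ t s : ℝ} (hκ : 0 < κ)
    (hy : Continuous y) (hconst : ∀ u ≤ 0, y u = y 0) (hy0 : 0 < y 0) (ht : 0 ≤ t)
    (hderiv : ∀ τ ∈ Ioo 0 t, HasDerivAt y (y' τ) τ) (hbd : ∀ τ ∈ Ioo 0 t, |y' τ| < κ * y τ)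
    (hs : 0 < s) :
    exp (-κ * s) * y t < y (t - s) ∧ y (t - s) < exp (κ * s) * y t := by
  rcases ht.eq_or_lt with rfl | ht
  · rw [zero_sub, hconst (-s) (by linarith)]
    have hlt : exp (-κ * s) < 1 := exp_lt_one_iff.2 (by nlinarith)
    have hgt : 1 < exp (κ * s) := one_lt_exp_iff.2 (by positivity)
    constructor <;> nlinarith
  set p := max (t - s) 0 with hp_def
  have hpt : p < t := max_lt (by linarith) ht
  have hyp : 0 < y p := by
    rcases (le_max_right (t - s) 0).eq_or_lt with hp | hp
    · rwa [hp_def, ← hp]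
    · exact pos_of_mul_pos_right ((abs_nonneg _).trans_lt (hbd p ⟨hp, hpt⟩)) hκ.le
  obtain ⟨hpast, hfut⟩ := lt_exp_mul_of_abs_deriv_lt hpt hy.continuousOn
    (fun τ hτ => hderiv τ ⟨(le_max_right _ _).trans_lt hτ.1, hτ.2⟩)
    fun τ hτ => hbd τ ⟨(le_max_right _ _).trans_lt hτ.1, hτ.2⟩
  have hyt : 0 < y t := pos_of_mul_pos_right (hyp.trans hpast) (exp_pos _).le
  have hexp : exp (κ * (t - p)) ≤ exp (κ * s) :=
    exp_le_exp.2 (mul_le_mul_of_nonneg_left (by linarith [le_max_left (t - s) 0]) hκ.le)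
  rw [apply_eq_apply_max_zero hconst (t - s), ← hp_def]
  constructor
  · rw [neg_mul, exp_neg, inv_mul_lt_iff₀ (exp_pos _)]
    exact hfut.trans_le (mul_le_mul_of_nonneg_right hexp hyp.le)
  · exact hpast.trans_le (mul_le_mul_of_nonneg_right hexp hyt.le)

end ConstantPast

section Delay

variable {y : ℝ → ℝ} {P : Measure ℝ}

lemma integrable_comp_sub [IsFiniteMeasure P] (hy : Continuous y)
    (hbdd : ∀ T, ∃ B, ∀ u ≤ T, ‖y u‖ ≤ B) (hP : ∀ᵐ s ∂P, 0 ≤ s) (t : ℝ) :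
    Integrable (fun s => y (t - s)) P := by
  obtain ⟨B, hB⟩ := hbdd t
  exact Integrable.of_bound (by fun_prop : Continuous fun s => y (t - s)).aestronglyMeasurable B
    (hP.mono fun s hs => hB _ (by linarith))

lemma continuous_integral_comp_sub [IsFiniteMeasure P] (hy : Continuous y)
    (hbdd : ∀ T, ∃ B, ∀ u ≤ T, ‖y u‖ ≤ B) (hP : ∀ᵐ s ∂P, 0 ≤ s) :
    Continuous fun t => ∫ s, y (t - s) ∂P := by
  refine continuous_iff_continuousAt.2 fun t₀ => ?_
  obtain ⟨B, hB⟩ := hbdd (t₀ + 1)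
  refine continuousAt_of_dominated (bound := fun _ => B)
    (Eventually.of_forall fun t =>
      (by fun_prop : Continuous fun s => y (t - s)).aestronglyMeasurable)
    ?_ (integrable_const B)
    (ae_of_all _ fun s => (by fun_prop : Continuous fun t => y (t - s)).continuousAt)
  filter_upwards [eventually_lt_nhds (lt_add_one t₀)] with t ht
  filter_upwards [hP] with s hs
  exact hB _ (by linarith)

lemma mul_add_mul_integral_comp_sub_lt {C₁ C₂ κ t : ℝ} (hC₂ : 0 ≤ C₂) (hP : ∀ᵐ s ∂P, 0 ≤ s)
    (hint : Integrable (fun s => y (t - s)) P) (hexp : Integrable (fun s => exp (κ * s)) P)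
    (hκ : C₁ + C₂ * ∫ s, exp (κ * s) ∂P < κ) (hyt : 0 < y t)
    (hpast : ∀ s > 0, y (t - s) ≤ exp (κ * s) * y t) :
    C₁ * y t + C₂ * ∫ s, y (t - s) ∂P < κ * y t := by
  have hI : ∫ s, y (t - s) ∂P ≤ (∫ s, exp (κ * s) ∂P) * y t := by
    rw [← integral_mul_const]
    refine integral_mono_ae hint (hexp.mul_const _) ?_
    filter_upwards [hP] with s hs
    rcases hs.eq_or_lt with rfl | hs
    · simp
    · exact hpast s hs
  calc C₁ * y t + C₂ * ∫ s, y (t - s) ∂P ≤ (C₁ + C₂ * ∫ s, exp (κ * s) ∂P) * y t := by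
        nlinarith [mul_le_mul_of_nonneg_left hI hC₂]
    _ < κ * y t := mul_lt_mul_of_pos_right hκ hyt

end Delay

theorem stmt_0_general
    (y : ℝ → ℝ) (P : Measure ℝ) [IsProbabilityMeasure P]
    (hP0 : P (Set.Iio 0) = 0)
    (hy_cont : Continuous y)
    (hy_C1 : ContDiffOn ℝ 1 y (Set.Ioi 0))
    (hy_const : ∀ t ≤ (0:ℝ), y t = y 0)
    (hy0_pos : 0 < y 0)
    (C₁ C₂ : ℝ) (hC₂ : 0 < C₂)
    (hineq : ∀ t > (0:ℝ),
      |deriv y t| ≤ C₁ * y t + C₂ * ∫ s, y (t - s) ∂P)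
    (y0' : ℝ)
    (κ : ℝ) (hκ : 0 < κ)
    (hκint : Integrable (fun s => Real.exp (κ * s)) P)
    (hκgt : max (|y0'| / y 0) (C₁ + C₂ * ∫ s, Real.exp (κ * s) ∂P) < κ) :
    ∀ t > (0:ℝ), ∀ s > (0:ℝ),
      Real.exp (-κ * s) * y t < y (t - s) ∧ y (t - s) < Real.exp (κ * s) * y t := by
  have hP : ∀ᵐ s ∂P, 0 ≤ s := ae_iff.2 (by simp only [not_le]; exact hP0)
  have hbdd := exists_norm_le_of_le hy_cont hy_const
  have hderiv : ∀ τ ∈ Ioi (0 : ℝ), HasDerivAt y (deriv y τ) τ := fun τ hτ =>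
    ((hy_C1.differentiableOn one_ne_zero).differentiableAt (Ioi_mem_nhds hτ)).hasDerivAt
  set G := {t | C₁ * y t + C₂ * ∫ s, y (t - s) ∂P < κ * y t}
  have hbounds : ∀ t ≥ 0, Ioo 0 t ⊆ G → ∀ s > 0,
      exp (-κ * s) * y t < y (t - s) ∧ y (t - s) < exp (κ * s) * y t :=
    fun t ht hG s hs => exp_mul_lt_and_lt_exp_mul_of_abs_deriv_lt hκ hy_cont hy_const hy0_pos ht
      (fun τ hτ => hderiv τ hτ.1) (fun τ hτ => (hineq τ hτ.1).trans_lt (hG hτ)) hs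
  have hgood : Ici 0 ⊆ G := by
    have hI := continuous_integral_comp_sub hy_cont hbdd hP
    refine Ici_subset_of_forall_Ico_subset (isOpen_lt (by fun_prop) (by fun_prop))
      fun t ht hbelow => ?_
    have hpast := hbounds t ht (Ioo_subset_Ico_self.trans hbelow)
    have hyt : 0 < y t := by
      have h := (hpast (t + 1) (by linarith)).2
      rw [hy_const (t - (t + 1)) (by linarith)] at h
      exact pos_of_mul_pos_right (hy0_pos.trans h) (exp_pos _).le
    exact mul_add_mul_integral_comp_sub_lt hC₂.le hP (integrable_comp_sub hy_cont hbdd hP t)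
      hκint ((le_max_right _ _).trans_lt hκgt) hyt fun s hs => (hpast s hs).2.le
  exact fun t ht => hbounds t ht.le fun τ hτ => hgood hτ.1.le

theorem stmt_0
    (y : ℝ → ℝ) (P : Measure ℝ) [IsProbabilityMeasure P]
    (hP0 : P (Set.Iio 0) = 0)
    (hy_nonneg : ∀ t, 0 ≤ y t)
    (hy_cont : Continuous y)
    (hy_C1 : ContDiffOn ℝ 1 y (Set.Ioi 0))
    (hy_const : ∀ t ≤ (0:ℝ), y t = y 0)
    (hy0_pos : 0 < y 0)
    (C₁ C₂ : ℝ) (hC₁ : 0 < C₁) (hC₂ : 0 < C₂)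
    (hint : ∀ t > (0:ℝ), Integrable (fun s => y (t - s)) P)
    (hineq : ∀ t > (0:ℝ),
      |deriv y t| ≤ C₁ * y t + C₂ * ∫ s, y (t - s) ∂P)
    (y0' : ℝ) (hy0' : HasDerivWithinAt y y0' (Set.Ici 0) 0)
    (κ : ℝ) (hκ : 0 < κ)
    (hκint : Integrable (fun s => Real.exp (κ * s)) P)
    (hκgt : max (|y0'| / y 0) (C₁ + C₂ * ∫ s, Real.exp (κ * s) ∂P) < κ) :
    ∀ t > (0:ℝ), ∀ s > (0:ℝ),
      Real.exp (-κ * s) * y t < y (t - s) ∧ y (t - s) < Real.exp (κ * s) * y t :=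
  stmt_0_general y P hP0 hy_cont hy_C1 hy_const hy0_pos C₁ C₂ hC₂ hineq y0' κ hκ hκint hκgt
end

section
/- For real numbers a, b with 0 < a ≤ b and κ̄ > 0, the Taylor-expansion lower bound holds: (4/((b-a)κ̄²))·( b e^{κ̄b} - a e^{κ̄a} - (e^{κ̄b}-e^{κ̄a})/κ̄ ) ≥ 2(a+b)/κ̄ + (4/3)(a² + ab + b²) + (κ̄/2)(a³ + a²b + ab² + b³). -/
/-! The bracket on the right is `∫ₐᵇ κ x e^{κx} dx`, and on `x ≥ 0` the integrand dominates
`κx + κ²x² + κ³x³/2`, the truncation of `t eᵗ` at `t = κx` after its cubic term. Integrating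
this polynomial over `[a, b]` and dividing by `(b - a) κ² / 4` gives the left-hand side. -/

open Real Set

theorem sub_le_sub_of_hasDerivAt_le {f g f' g' : ℝ → ℝ} {a b : ℝ}
    (hf : ∀ x, HasDerivAt f (f' x) x) (hg : ∀ x, HasDerivAt g (g' x) x)
    (hle : ∀ x ∈ Ioo a b, g' x ≤ f' x) (hab : a ≤ b) :
    g b - g a ≤ f b - f a := by
  have hmono : MonotoneOn (f - g) (Icc a b) := by
    refine monotoneOn_of_hasDerivWithinAt_nonneg (convex_Icc a b)
      (fun x _ ↦ ((hf x).sub (hg x)).continuousAt.continuousWithinAt)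
      (fun x _ ↦ ((hf x).sub (hg x)).hasDerivWithinAt) fun x hx ↦ ?_
    rw [interior_Icc] at hx
    exact sub_nonneg.2 (hle x hx)
  have := hmono (left_mem_Icc.2 hab) (right_mem_Icc.2 hab) hab
  simp only [Pi.sub_apply] at this
  linarith

theorem cubic_le_mul_exp_of_nonneg {t : ℝ} (ht : 0 ≤ t) : t + t ^ 2 + t ^ 3 / 2 ≤ t * exp t := by
  have := mul_le_mul_of_nonneg_left (quadratic_le_exp_of_nonneg ht) ht
  linarith

theorem hasDerivAt_mul_exp_sub_exp_div (κ x : ℝ) (hκ : κ ≠ 0) :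
    HasDerivAt (fun x ↦ x * exp (κ * x) - exp (κ * x) / κ) (κ * x * exp (κ * x)) x := by
  have hexp := ((hasDerivAt_id' x).const_mul κ).exp
  exact (((hasDerivAt_id' x).mul hexp).sub (hexp.div_const κ)).congr_deriv (by field_simp; ring)

theorem hasDerivAt_cubic_antideriv (κ x : ℝ) :
    HasDerivAt (fun x ↦ κ * x ^ 2 / 2 + κ ^ 2 * x ^ 3 / 3 + κ ^ 3 * x ^ 4 / 8)
      (κ * x + κ ^ 2 * x ^ 2 + κ ^ 3 * x ^ 3 / 2) x := by
  exact (((((hasDerivAt_pow 2 x).const_mul κ).div_const 2).add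
    (((hasDerivAt_pow 3 x).const_mul (κ ^ 2)).div_const 3)).add
    (((hasDerivAt_pow 4 x).const_mul (κ ^ 3)).div_const 8)).congr_deriv (by push_cast; ring)

theorem cubic_antideriv_sub_le_mul_exp_antideriv_sub {a b κ : ℝ} (ha : 0 ≤ a) (hab : a ≤ b)
    (hκ : 0 < κ) :
    κ * (b ^ 2 - a ^ 2) / 2 + κ ^ 2 * (b ^ 3 - a ^ 3) / 3 + κ ^ 3 * (b ^ 4 - a ^ 4) / 8 ≤
      b * exp (κ * b) - a * exp (κ * a) - (exp (κ * b) - exp (κ * a)) / κ := by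
  have key := sub_le_sub_of_hasDerivAt_le (hasDerivAt_mul_exp_sub_exp_div κ · hκ.ne')
    (hasDerivAt_cubic_antideriv κ) (fun x hx ↦ ?_) hab
  · linear_combination key
  · have := cubic_le_mul_exp_of_nonneg (mul_nonneg hκ.le (ha.trans hx.1.le))
    linear_combination this

theorem stmt_8 (a b κ : ℝ) (ha : 0 < a) (hab : a < b) (hκ : 0 < κ) :
    2 * (a + b) / κ + (4 / 3) * (a ^ 2 + a * b + b ^ 2) +
        (κ / 2) * (a ^ 3 + a ^ 2 * b + a * b ^ 2 + b ^ 3) ≤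
      (4 / ((b - a) * κ ^ 2)) *
        (b * Real.exp (κ * b) - a * Real.exp (κ * a) -
          (Real.exp (κ * b) - Real.exp (κ * a)) / κ) := by
  have hba : 0 < b - a := sub_pos.2 hab
  calc 2 * (a + b) / κ + (4 / 3) * (a ^ 2 + a * b + b ^ 2) +
        (κ / 2) * (a ^ 3 + a ^ 2 * b + a * b ^ 2 + b ^ 3)
      = (4 / ((b - a) * κ ^ 2)) *
          (κ * (b ^ 2 - a ^ 2) / 2 + κ ^ 2 * (b ^ 3 - a ^ 3) / 3 + κ ^ 3 * (b ^ 4 - a ^ 4) / 8) := by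
        field_simp
        ring
    _ ≤ _ := mul_le_mul_of_nonneg_left
        (cubic_antideriv_sub_le_mul_exp_antideriv_sub ha.le hab.le hκ) (by positivity)
end
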